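/- arXiv:1511.01532 — 5 statements merged into one kernel-verified Lean document; each statement's English description precedes it below -/
import Mathlib

section
/- In an approximate categorical structure, for any x,y ∈ X and f,g ∈ A(x,y), d(f,1_y,g) = d(1_x,f,g). -/
/-- An approximate categorical structure (AC structure): a graph with identities
and a triangular distance function satisfying the identity axioms and the
left/right associativity (tetrahedral) inequalities. -/
structure ACStruct where
  Obj : Type
  Hom : Obj → Obj → Type
  ident : ∀ x, Hom x x
  d : ∀ {x y z}, Hom x y → Hom y z → Hom x z → ℝ
  left_ident : ∀ {x y} (f : Hom x y), d f (ident y) f = 0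
  right_ident : ∀ {x y} (f : Hom x y), d (ident x) f f = 0
  left_assoc : ∀ {x y z w} (f : Hom x y) (g : Hom y z) (h : Hom z w)
      (a : Hom x z) (b : Hom y w) (c : Hom x w),
      d a h c ≤ d f g a + d g h b + d f b c
  right_assoc : ∀ {x y z w} (f : Hom x y) (g : Hom y z) (h : Hom z w)
      (a : Hom x z) (b : Hom y w) (c : Hom x w),
      d f b c ≤ d f g a + d g h b + d a h c

/-- The induced pseudometric on arrow sets: φ(f,g) := d(1_x, f, g). -/
noncomputable def ACStruct.φ (S : ACStruct) {x y : S.Obj} (f g : S.Hom x y) : ℝ :=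
  S.d (S.ident x) f g

/- Both inequalities are the associativity axioms for the composable triple (1_x, f, 1_y)
with a = b = f and c = g: the faces d(1_x, f, f) and d(f, 1_y, f) vanish. -/

namespace ACStruct

variable (S : ACStruct) {x y : S.Obj} (f g : S.Hom x y)

theorem d_comp_ident_le : S.d f (S.ident y) g ≤ S.d (S.ident x) f g := by
  simpa [S.left_ident, S.right_ident] using S.left_assoc (S.ident x) f (S.ident y) f f g

theorem d_ident_comp_le : S.d (S.ident x) f g ≤ S.d f (S.ident y) g := by
  simpa [S.left_ident, S.right_ident] using S.right_assoc (S.ident x) f (S.ident y) f f g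

end ACStruct

theorem stmt4 (S : ACStruct) {x y : S.Obj} (f g : S.Hom x y) :
    S.d f (S.ident y) g = S.d (S.ident x) f g :=
  le_antisymm (S.d_comp_ident_le f g) (S.d_ident_comp_le f g)
end

section
/- In an approximate categorical structure, the function φ(f,g) := d(1_x,f,g) on each arrow set A(x,y) is a pseudometric: φ(f,f)=0, φ(f,g)=φ(g,f), and φ(f,g) ≤ φ(f,h)+φ(h,g). -/
namespace ACStruct

variable (S : ACStruct) {x y : S.Obj}

theorem φ_self (f : S.Hom x y) : S.φ f f = 0 :=
  S.right_ident f

/-- Right associativity for the composable triple `(1_x, 1_x, h)`, with `1_x` as the composite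
of the first two. -/
theorem φ_le_φ_add_φ (h f g : S.Hom x y) : S.φ f g ≤ S.φ h f + S.φ h g := by
  have assoc := S.right_assoc (S.ident x) (S.ident x) h (S.ident x) f g
  rwa [S.right_ident, zero_add] at assoc

theorem φ_comm (f g : S.Hom x y) : S.φ f g = S.φ g f := by
  have hfg := S.φ_le_φ_add_φ g f g
  have hgf := S.φ_le_φ_add_φ f g f
  rw [φ_self] at hfg hgf
  linarith

theorem φ_triangle (f g h : S.Hom x y) : S.φ f g ≤ S.φ f h + S.φ h g := by
  simpa only [S.φ_comm h f] using S.φ_le_φ_add_φ h f g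

end ACStruct

theorem stmt5 (S : ACStruct) {x y : S.Obj} :
    (∀ f : S.Hom x y, S.φ f f = 0) ∧
    (∀ f g : S.Hom x y, S.φ f g = S.φ g f) ∧
    (∀ f g h : S.Hom x y, S.φ f g ≤ S.φ f h + S.φ h g) :=
  ⟨S.φ_self, S.φ_comm, S.φ_triangle⟩
end

section
/- In an approximate categorical structure, given f ∈ A(x,y), g ∈ A(y,z) and a,a' ∈ A(x,z), we have φ(a,a') ≤ d(f,g,a) + d(f,g,a'). -/
theorem stmt10 (S : ACStruct) {x y z : S.Obj}
    (f : S.Hom x y) (g : S.Hom y z) (a a' : S.Hom x z) :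
    S.φ a a' ≤ S.d f g a + S.d f g a' := by
  calc S.φ a a' ≤ S.d (S.ident x) f f + S.d f g a + S.d f g a' :=
        S.right_assoc (S.ident x) f g f a a'
    _ = S.d f g a + S.d f g a' := by rw [S.right_ident, zero_add]
end

section
/- Suppose an AC structure (X,A,d) is ε-categoric for every ε>0 (for all f ∈ A(x,y), g ∈ A(y,z) and ε>0 there exists h ∈ A(x,z) with d(f,g,h) ≤ ε) and each (A(x,y),φ) is a complete pseudometric space. Then (X,A,d) is 0-categoric: for all composable f,g there exists h with d(f,g,h)=0. -/
/-!
Pick near-composites `h n` with `d f g (h n) → 0`. The associativity inequalities applied to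
the triple `(1, f, g)` give `φ a b ≤ d f g a + d f g b` and `d f g b ≤ d f g a + φ a b`:
the first makes `h` a `φ`-Cauchy sequence, and the second shows that its limit `l` satisfies
`d f g l ≤ 0`, while `d` is nonnegative.
-/

open Filter Topology

namespace ACStruct

variable (S : ACStruct) {x y z : S.Obj}

theorem φ_le_d_add_d (f : S.Hom x y) (g : S.Hom y z) (a b : S.Hom x z) :
    S.φ a b ≤ S.d f g a + S.d f g b := by
  have := S.right_assoc (S.ident x) f g f a b
  rw [S.right_ident f] at this
  unfold φ
  linarith

theorem d_le_d_add_φ (f : S.Hom x y) (g : S.Hom y z) (a b : S.Hom x z) :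
    S.d f g b ≤ S.d f g a + S.φ a b := by
  have := S.left_assoc (S.ident x) f g f a b
  rw [S.right_ident f] at this
  unfold φ
  linarith

theorem φ_self_nonneg (a : S.Hom x y) : 0 ≤ S.φ a a := by
  simpa using S.d_le_d_add_φ (S.ident x) a a a

theorem d_nonneg (f : S.Hom x y) (g : S.Hom y z) (h : S.Hom x z) : 0 ≤ S.d f g h := by
  linarith [S.φ_self_nonneg h, S.φ_le_d_add_d f g h h]

variable {S}

theorem exists_seq_tendsto_d_zero {f : S.Hom x y} {g : S.Hom y z}
    (hfg : ∀ ε : ℝ, 0 < ε → ∃ h : S.Hom x z, S.d f g h ≤ ε) :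
    ∃ u : ℕ → S.Hom x z, Tendsto (fun n => S.d f g (u n)) atTop (𝓝 0) := by
  choose u hu using fun n : ℕ => hfg (1 / (n + 1)) Nat.one_div_pos_of_nat
  exact ⟨u, squeeze_zero (fun n => S.d_nonneg f g (u n)) hu
    tendsto_one_div_add_atTop_nhds_zero_nat⟩

theorem cauchy_of_tendsto_d_zero {f : S.Hom x y} {g : S.Hom y z} {u : ℕ → S.Hom x z}
    (hu : Tendsto (fun n => S.d f g (u n)) atTop (𝓝 0)) :
    ∀ ε : ℝ, 0 < ε → ∃ N : ℕ, ∀ m n : ℕ, N ≤ m → N ≤ n → S.φ (u m) (u n) < ε := by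
  intro ε hε
  obtain ⟨N, hN⟩ := eventually_atTop.1 ((tendsto_order.1 hu).2 (ε / 2) (by positivity))
  refine ⟨N, fun m n hm hn => ?_⟩
  linarith [S.φ_le_d_add_d f g (u m) (u n), hN m hm, hN n hn]

theorem d_eq_zero_of_tendsto {f : S.Hom x y} {g : S.Hom y z} {u : ℕ → S.Hom x z}
    {l : S.Hom x z} (hu : Tendsto (fun n => S.d f g (u n)) atTop (𝓝 0))
    (hl : ∀ ε : ℝ, 0 < ε → ∃ N : ℕ, ∀ n : ℕ, N ≤ n → S.φ (u n) l < ε) :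
    S.d f g l = 0 := by
  refine le_antisymm (le_of_forall_pos_lt_add fun ε hε => ?_) (S.d_nonneg f g l)
  obtain ⟨N₁, hN₁⟩ := hl (ε / 2) (by positivity)
  obtain ⟨N₂, hN₂⟩ := eventually_atTop.1 ((tendsto_order.1 hu).2 (ε / 2) (by positivity))
  linarith [S.d_le_d_add_φ f g (u (max N₁ N₂)) l, hN₁ _ (le_max_left N₁ N₂),
    hN₂ _ (le_max_right N₁ N₂)]

end ACStruct

theorem stmt16 (S : ACStruct)
    (epcat : ∀ {x y z : S.Obj} (f : S.Hom x y) (g : S.Hom y z) (ε : ℝ), 0 < ε →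
      ∃ h : S.Hom x z, S.d f g h ≤ ε)
    (complete : ∀ {x y : S.Obj} (u : ℕ → S.Hom x y),
      (∀ ε : ℝ, 0 < ε → ∃ N : ℕ, ∀ m n : ℕ, N ≤ m → N ≤ n → S.φ (u m) (u n) < ε) →
      ∃ l : S.Hom x y, ∀ ε : ℝ, 0 < ε → ∃ N : ℕ, ∀ n : ℕ, N ≤ n → S.φ (u n) l < ε) :
    ∀ {x y z : S.Obj} (f : S.Hom x y) (g : S.Hom y z),
      ∃ h : S.Hom x z, S.d f g h = 0 := by
  intro x y z f g
  obtain ⟨u, hu⟩ := ACStruct.exists_seq_tendsto_d_zero (epcat f g)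
  obtain ⟨l, hl⟩ := complete u (ACStruct.cauchy_of_tendsto_d_zero hu)
  exact ⟨l, ACStruct.d_eq_zero_of_tendsto hu hl⟩
end

section
/- If an AC structure (X,A,d) is ε-categoric for every ε>0, then it is absolutely left transitive: for all f ∈ A(x,y), g ∈ A(y,z), h ∈ A(z,w), k ∈ A(y,w), l ∈ A(x,w), we have inf over a ∈ A(x,z) of (d(f,g,a) + d(a,h,l)) ≤ d(g,h,k) + d(f,k,l). -/
/-! Left associativity gives `d(f,g,a) + d(a,h,l) ≤ d(g,h,k) + d(f,k,l) + 2 d(f,g,a)`, and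
ε-categoricity makes `d(f,g,a)` arbitrarily small. Right associativity bounds the sums from
below, so the infimum is not the junk value of `sInf` on an unbounded set. -/

namespace ACStruct

variable (S : ACStruct) {x y z w : S.Obj} (f : S.Hom x y) (g : S.Hom y z) (h : S.Hom z w)
  (l : S.Hom x w)

theorem bddBelow_d_add_d (k : S.Hom y w) :
    BddBelow {r : ℝ | ∃ a : S.Hom x z, r = S.d f g a + S.d a h l} :=
  ⟨S.d f k l - S.d g h k, by rintro r ⟨a, rfl⟩; linarith [S.right_assoc f g h a k l]⟩

theorem d_add_d_le (k : S.Hom y w) (a : S.Hom x z) :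
    S.d f g a + S.d a h l ≤ S.d g h k + S.d f k l + 2 * S.d f g a := by
  linarith [S.left_assoc f g h a k l]

end ACStruct

theorem stmt17 (S : ACStruct)
    (epcat : ∀ {x y z : S.Obj} (f : S.Hom x y) (g : S.Hom y z) (ε : ℝ), 0 < ε →
      ∃ h : S.Hom x z, S.d f g h ≤ ε)
    {x y z w : S.Obj} (f : S.Hom x y) (g : S.Hom y z) (h : S.Hom z w)
    (k : S.Hom y w) (l : S.Hom x w) :
    sInf {r : ℝ | ∃ a : S.Hom x z, r = S.d f g a + S.d a h l}
      ≤ S.d g h k + S.d f k l := by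
  refine le_of_forall_pos_le_add fun ε hε => ?_
  obtain ⟨a, ha⟩ := epcat f g (ε / 2) (half_pos hε)
  calc sInf {r : ℝ | ∃ a : S.Hom x z, r = S.d f g a + S.d a h l}
      ≤ S.d f g a + S.d a h l := csInf_le (S.bddBelow_d_add_d f g h l k) ⟨a, rfl⟩
    _ ≤ S.d g h k + S.d f k l + 2 * S.d f g a := S.d_add_d_le f g h l k a
    _ ≤ S.d g h k + S.d f k l + ε := by linarith
end
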